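/- Let f(x) ∈ ℤ[x] be a monic polynomial of degree d ≥ 1. Then there exist infinitely many primes p such that f splits into linear factors over ℤ/p. -/

import Mathlib

/-!
Let `K` be the splitting field of `f` over `ℚ` and `θ` an algebraic integer with `K = ℚ(θ)`. The
roots of `f` are algebraic integers, so the discriminant `N` of the power basis of `θ` satisfies
`N • α ∈ ℤ[θ]` for every root `α`. By Schur's theorem the minimal polynomial `g` of `θ` has a root
`t` modulo infinitely many primes `p`; for those with `p ∤ N`, the map `ℤ[θ] ≅ ℤ[X]/(g) → 𝔽_p`,
`θ ↦ t` sends the factorisation `N^d f = ∏ (N X - N α)` over `ℤ[θ]` to one over `𝔽_p`, and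
dividing by `N^d` splits `f` modulo `p`.
-/

open Polynomial Filter

namespace Polynomial

theorem exists_prime_gt_dvd_eval {g : ℤ[X]} (hg : 0 < g.natDegree) (n : ℕ) :
    ∃ p : ℕ, p.Prime ∧ n < p ∧ ∃ k : ℤ, (p : ℤ) ∣ g.eval k := by
  by_cases hc : g.eval 0 = 0
  · obtain ⟨p, hnp, hp⟩ := Nat.exists_infinite_primes (n + 1)
    exact ⟨p, hp, hnp, 0, by simp [hc]⟩
  set c := g.eval 0
  set G := g.comp (C (c * n.factorial) * X)
  have hG : G.natDegree = g.natDegree := by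
    rw [natDegree_comp, natDegree_C_mul_X _ (mul_ne_zero hc (by positivity)), mul_one]
  obtain ⟨k, hk⟩ : ∃ k, ((G - C c) * (G + C c)).eval k ≠ 0 := by
    by_contra! h
    refine mul_ne_zero ?_ ?_ (zero_of_eval_zero _ h) <;> refine ne_zero_of_natDegree_gt (n := 0) ?_
    · rwa [natDegree_sub_C, hG]
    · rwa [natDegree_add_C, hG]
  -- `g (c n! k) = c w` with `w ≡ 1 [ZMOD n!]` and `w ≠ ±1`, so `w` has a prime factor `> n`.
  obtain ⟨m, hm⟩ := sub_dvd_eval_sub (c * n.factorial * k) 0 g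
  set w := 1 + n.factorial * k * m
  have hval : g.eval (c * n.factorial * k) = c * w := by linear_combination hm
  have hw : w.natAbs ≠ 1 := by
    intro h
    rcases Int.natAbs_eq_iff.1 h with h | h <;> simp [G, eval_comp, hval, h] at hk
  obtain ⟨q, hq, hqw⟩ := Nat.exists_prime_and_dvd hw
  refine ⟨q, hq, not_le.1 fun hqn => hq.one_lt.ne' ?_, c * n.factorial * k,
    hval ▸ (Int.ofNat_dvd_left.2 hqw).mul_left c⟩
  have hqn : (q : ℤ) ∣ n.factorial * k * m :=
    ((Int.natCast_dvd_natCast.2 (hq.dvd_factorial.2 hqn)).mul_right k).mul_right m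
  exact Nat.dvd_one.1 (Int.natCast_dvd_natCast.1 ((dvd_add_left hqn).1 (Int.ofNat_dvd_left.2 hqw)))

theorem frequently_atTop_prime_and_exists_isRoot_map {g : ℤ[X]} (hg : 0 < g.natDegree) :
    ∃ᶠ p in atTop, p.Prime ∧ ∃ t : ZMod p, (g.map (Int.castRingHom (ZMod p))).IsRoot t := by
  refine frequently_atTop.2 fun n => ?_
  obtain ⟨p, hp, hnp, k, hk⟩ := exists_prime_gt_dvd_eval hg n
  refine ⟨p, hnp.le, hp, k, ?_⟩
  rwa [IsRoot.def, eval_intCast_map, eq_intCast, ZMod.intCast_zmod_eq_zero_iff_dvd]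

theorem Splits.exists_eq_prod_X_sub_C {K : Type*} [Field K] {g : K[X]} (hs : g.Splits)
    (hm : g.Monic) {n : ℕ} (hn : g.natDegree = n) : ∃ α : Fin n → K, g = ∏ i, (X - C (α i)) := by
  have hlen : g.roots.toList.length = n := by
    rw [Multiset.length_toList, ← hn, hs.natDegree_eq_card_roots]
  refine ⟨fun i => g.roots.toList[i.cast hlen.symm], ?_⟩
  conv_lhs => rw [hs.eq_prod_roots_of_monic hm, ← Multiset.coe_toList g.roots, Multiset.map_coe,
    Multiset.prod_coe, ← Fin.prod_univ_fun_getElem]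
  exact (Fin.prod_congr' (fun i => X - C g.roots.toList[i]) hlen.symm).symm

theorem C_pow_mul_prod_X_sub_C {R : Type*} [CommRing R] {n : ℕ} (u : R) (a : Fin n → R) :
    C u ^ n * ∏ i, (X - C (a i)) = ∏ i, (C u * X - C (u * a i)) := by
  have := Finset.pow_card_mul_prod (s := .univ) (f := fun i => X - C (a i)) (b := C u)
  rw [Finset.card_univ, Fintype.card_fin] at this
  simp only [this, mul_sub, C_mul]

theorem exists_map_eq_prod_X_sub_C_of_smul_mem {K F : Type*} [Field K] [Field F]
    {A : Subalgebra ℤ K} (φ : A →+* F) {f : ℤ[X]} {n : ℕ} {α : Fin n → K}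
    (hα : f.map (Int.castRingHom K) = ∏ i, (X - C (α i))) {N : ℤ} (hN : ∀ i, N • α i ∈ A)
    (hNF : (N : F) ≠ 0) : ∃ r : Fin n → F, f.map (Int.castRingHom F) = ∏ i, (X - C (r i)) := by
  let β : Fin n → A := fun i => ⟨N • α i, hN i⟩
  have hA : C (N : A) ^ n * f.map (Int.castRingHom A) = ∏ i, (C (N : A) * X - C (β i)) := by
    apply map_injective (algebraMap A K) Subtype.val_injective
    simp only [Polynomial.map_mul, Polynomial.map_pow, map_C, map_intCast (algebraMap A K), map_map,
      Subsingleton.elim ((algebraMap A K).comp (Int.castRingHom A)) (Int.castRingHom K), hα,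
      C_pow_mul_prod_X_sub_C, Polynomial.map_prod, Polynomial.map_sub, map_X, β, zsmul_eq_mul]
    rfl
  have hF := congrArg (map φ) hA
  simp only [Polynomial.map_mul, Polynomial.map_pow, map_C, map_intCast φ, map_map,
    Subsingleton.elim (φ.comp (Int.castRingHom A)) (Int.castRingHom F), Polynomial.map_prod,
    Polynomial.map_sub, map_X] at hF
  refine ⟨fun i => (N : F)⁻¹ * φ (β i), mul_left_cancel₀ (pow_ne_zero n (C_ne_zero.2 hNF)) ?_⟩
  rw [hF, C_pow_mul_prod_X_sub_C]
  simp only [mul_inv_cancel_left₀ hNF]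

end Polynomial

theorem exists_powerBasis_isIntegral_gen (R K L : Type*) [CommRing R] [IsDomain R] [Field K]
    [Field L] [Algebra R K] [IsFractionRing R K] [Algebra K L] [Algebra R L] [IsScalarTower R K L]
    [FiniteDimensional K L] [Algebra.IsSeparable K L] :
    ∃ B : PowerBasis K L, IsIntegral R B.gen := by
  let B₀ := Field.powerBasisOfFiniteOfSeparable K L
  obtain ⟨y, hy, hint⟩ := ((IsFractionRing.isAlgebraic_iff R K L).2
    (Algebra.IsAlgebraic.isAlgebraic B₀.gen)).exists_integral_multiple
  have hy' : algebraMap R K y ≠ 0 := by simpa using (IsFractionRing.injective R K).ne hy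
  have hgen : Algebra.adjoin K {y • B₀.gen} = ⊤ := by
    rw [eq_top_iff, ← B₀.adjoin_gen_eq_top, Algebra.adjoin_le_iff, Set.singleton_subset_iff,
      SetLike.mem_coe]
    convert Subalgebra.smul_mem _ (Algebra.self_mem_adjoin_singleton K (y • B₀.gen))
      (algebraMap R K y)⁻¹ using 1
    rw [← algebraMap_smul K y, smul_smul, inv_mul_cancel₀ hy', one_smul]
  exact ⟨.ofAdjoinEqTop (Algebra.IsIntegral.isIntegral _) hgen, hint⟩

theorem exists_ne_zero_smul_mem_adjoin_of_isIntegral {R K L : Type*} [CommRing R]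
    [IsIntegrallyClosed R] [Field K] [Field L] [Algebra R K] [IsFractionRing R K] [Algebra K L]
    [Algebra R L] [IsScalarTower R K L] [FiniteDimensional K L] [Algebra.IsSeparable K L]
    (B : PowerBasis K L) (hB : IsIntegral R B.gen) :
    ∃ N : R, N ≠ 0 ∧ ∀ z : L, IsIntegral R z → N • z ∈ Algebra.adjoin R {B.gen} := by
  obtain ⟨N, hN⟩ := IsIntegrallyClosed.isIntegral_iff.1
    (Algebra.discr_isIntegral K fun i => B.basis_eq_pow i ▸ hB.pow _)
  refine ⟨N, fun h => Algebra.discr_not_zero_of_basis K B.basis (by rw [← hN, h, map_zero]),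
    fun z hz => ?_⟩
  rw [← algebraMap_smul K N z, hN]
  exact Algebra.discr_mul_isIntegral_mem_adjoin K hB hz

theorem infinite_setOf_prime_map_eq_prod_X_sub_C {K : Type*} [Field K] [NumberField K]
    {f : ℤ[X]} (hf : f.Monic) {n : ℕ} {α : Fin n → K}
    (hα : f.map (Int.castRingHom K) = ∏ i, (X - C (α i))) :
    {p : ℕ | p.Prime ∧ ∃ r : Fin n → ZMod p,
      f.map (Int.castRingHom (ZMod p)) = ∏ i, (X - C (r i))}.Infinite := by
  have hαint (i) : IsIntegral ℤ (α i) := by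
    refine ⟨f, hf, ?_⟩
    rw [eval₂_eq_eval_map, RingHom.ext_int (algebraMap ℤ K) (Int.castRingHom K), hα, eval_prod]
    exact Finset.prod_eq_zero (Finset.mem_univ i) (by simp)
  obtain ⟨B, hB⟩ := exists_powerBasis_isIntegral_gen ℤ ℚ K
  obtain ⟨N, hN0, hN⟩ := exists_ne_zero_smul_mem_adjoin_of_isIntegral B hB
  refine Nat.frequently_atTop_iff_infinite.1 (((frequently_atTop_prime_and_exists_isRoot_map
    (minpoly.natDegree_pos hB)).and_eventually (eventually_gt_atTop N.natAbs)).mono ?_)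
  rintro p ⟨⟨hp, t, ht⟩, hpN⟩
  have : Fact p.Prime := ⟨hp⟩
  have hNp : (N : ZMod p) ≠ 0 := fun h => hpN.not_ge <| Nat.le_of_dvd (Int.natAbs_pos.2 hN0)
    (Int.ofNat_dvd_left.1 ((ZMod.intCast_zmod_eq_zero_iff_dvd N p).1 h))
  let φ : Algebra.adjoin ℤ {B.gen} →+* ZMod p :=
    (AdjoinRoot.lift (Int.castRingHom (ZMod p)) t (by rwa [IsRoot.def, eval_map] at ht)).comp
      (minpoly.equivAdjoin hB).symm.toRingHom
  exact ⟨hp, exists_map_eq_prod_X_sub_C_of_smul_mem φ hα (fun i => hN _ (hαint i)) hNp⟩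

theorem stmt4_general (f : Polynomial ℤ) (hf : f.Monic) (d : ℕ) (hd : f.natDegree = d) :
    {p : ℕ | p.Prime ∧ ∃ r : Fin d → ZMod p,
      f.map (Int.castRingHom (ZMod p)) =
        ∏ k : Fin d, (Polynomial.X - Polynomial.C (r k))}.Infinite := by
  let K := SplittingField (f.map (Int.castRingHom ℚ))
  have hs : (f.map (Int.castRingHom K)).Splits := by
    rw [← RingHom.ext_int ((algebraMap ℚ K).comp (Int.castRingHom ℚ)) (Int.castRingHom K),
      ← Polynomial.map_map]
    exact SplittingField.splits _
  obtain ⟨α, hα⟩ := hs.exists_eq_prod_X_sub_C (hf.map _) ((hf.natDegree_map _).trans hd)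
  have : NumberField K := ⟨⟩
  exact infinite_setOf_prime_map_eq_prod_X_sub_C hf hα

/-- corollary of Frobenius density: for any monic integer
polynomial `f` of degree `d ≥ 1`, there are infinitely many primes `p`
such that `f` splits into linear factors over `ℤ/p`. -/
theorem stmt4 (f : Polynomial ℤ) (hf : f.Monic) (d : ℕ) (hd : f.natDegree = d)
    (hd1 : 1 ≤ d) :
    {p : ℕ | p.Prime ∧ ∃ r : Fin d → ZMod p,
      f.map (Int.castRingHom (ZMod p)) =
        ∏ k : Fin d, (Polynomial.X - Polynomial.C (r k))}.Infinite :=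
  stmt4_general f hf d hd
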